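/- Let g₁, g₂ : ℝ² → ℝ be C² and nowhere zero, and consider the diagonal 2-dimensional metric g = diag(g₁, g₂) in coordinates (x¹, x²). Define the Christoffel coefficients L̂^i_{jk} = (1/2) g^{ir}(∂_k g_{jr} + ∂_j g_{kr} − ∂_r g_{jk}) and the Ricci tensor R̂_{hj} = ∂_k L̂^k_{hj} − ∂_j L̂^k_{hk} + L̂^m_{hj} L̂^k_{mk} − L̂^m_{hk} L̂^k_{mj}. Then R̂₁₁/g₁ = R̂₂₂/g₂ = −(1/(2 g₁ g₂)) [ g₂•• − (g₁• g₂•)/(2 g₁) − (g₂•)²/(2 g₂) + g₁″ − (g₁′ g₂′)/(2 g₂) − (g₁′)²/(2 g₁) ], where a• = ∂a/∂x¹ and a′ = ∂a/∂x². (This is the horizontal equation (eq1b) of the decoupling Theorem 2.6.) -/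

import Mathlib

/- STATEMENT 8 (horizontal equation (eq1b) of Theorem 2.6): for a diagonal 2-d
metric g = diag(g₁,g₂) in coordinates (x¹,x²), the Ricci tensor satisfies
R̂₁₁/g₁ = R̂₂₂/g₂ = −(1/(2g₁g₂))[g₂•• − g₁•g₂•/(2g₁) − (g₂•)²/(2g₂)
+ g₁″ − g₁′g₂′/(2g₂) − (g₁′)²/(2g₁)]. -/

noncomputable section

/-- Partial derivative `∂_k f` on ℝ². -/
def pd (k : Fin 2) (f : (Fin 2 → ℝ) → ℝ) (u : Fin 2 → ℝ) : ℝ :=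
  fderiv ℝ f u (Pi.single k 1)

/-- The diagonal metric `diag(g₁, g₂)`. -/
def gmat (g₁ g₂ : (Fin 2 → ℝ) → ℝ) (i j : Fin 2) (u : Fin 2 → ℝ) : ℝ :=
  if i = j then (if i = 0 then g₁ u else g₂ u) else 0

/-- The inverse metric `diag(1/g₁, 1/g₂)`. -/
def gmatInv (g₁ g₂ : (Fin 2 → ℝ) → ℝ) (i j : Fin 2) (u : Fin 2 → ℝ) : ℝ :=
  if i = j then (if i = 0 then (g₁ u)⁻¹ else (g₂ u)⁻¹) else 0

/-- Christoffel coefficients `L̂^i_{jk} = (1/2) g^{ir}(∂_k g_{jr} + ∂_j g_{kr} − ∂_r g_{jk})`. -/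
def Lhat (g₁ g₂ : (Fin 2 → ℝ) → ℝ) (i j k : Fin 2) (u : Fin 2 → ℝ) : ℝ :=
  (1/2) * ∑ r : Fin 2, gmatInv g₁ g₂ i r u *
    (pd k (gmat g₁ g₂ j r) u + pd j (gmat g₁ g₂ k r) u - pd r (gmat g₁ g₂ j k) u)

/-- Ricci tensor `R̂_{hj} = ∂_k L̂^k_{hj} − ∂_j L̂^k_{hk} + L̂^m_{hj} L̂^k_{mk} − L̂^m_{hk} L̂^k_{mj}`. -/
def Ric (g₁ g₂ : (Fin 2 → ℝ) → ℝ) (h j : Fin 2) (u : Fin 2 → ℝ) : ℝ :=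
  (∑ k : Fin 2, pd k (Lhat g₁ g₂ k h j) u)
    - pd j (fun v => ∑ k : Fin 2, Lhat g₁ g₂ k h k v) u
    + (∑ m : Fin 2, ∑ k : Fin 2, Lhat g₁ g₂ m h j u * Lhat g₁ g₂ k m k u)
    - ∑ m : Fin 2, ∑ k : Fin 2, Lhat g₁ g₂ m h k u * Lhat g₁ g₂ k m j u

/-! For a diagonal metric every Christoffel symbol is of the form `±∂_k g_j / (2 g_i)`.
Substituting them into `R̂₁₁` and `R̂₂₂` and differentiating these quotients once more
shows `R̂_{ii} = K g_i`, where `K` is Gauss's formula for the curvature of `diag(g₁, g₂)`;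
the right-hand side of the theorem is `K`. -/

section PartialDerivatives

variable {k : Fin 2} {u : Fin 2 → ℝ} {f g : (Fin 2 → ℝ) → ℝ}

@[simp]
lemma pd_const (c : ℝ) : pd k (fun _ => c) u = 0 := by simp [pd]

lemma pd_neg : pd k (fun v => -f v) u = -pd k f u := by simp [pd, fderiv_fun_neg]

lemma pd_add (hf : DifferentiableAt ℝ f u) (hg : DifferentiableAt ℝ g u) :
    pd k (fun v => f v + g v) u = pd k f u + pd k g u := by
  simp [pd, fderiv_fun_add hf hg]

lemma pd_const_mul (c : ℝ) (hf : DifferentiableAt ℝ f u) :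
    pd k (fun v => c * f v) u = c * pd k f u := by
  simp [pd, fderiv_const_mul hf]

lemma pd_div (hf : DifferentiableAt ℝ f u) (hg : DifferentiableAt ℝ g u) (hg0 : g u ≠ 0) :
    pd k (fun v => f v / g v) u = (pd k f u * g u - f u * pd k g u) / g u ^ 2 := by
  have hinv : HasFDerivAt (fun v => (g v)⁻¹) ((-(g u ^ 2)⁻¹) • fderiv ℝ g u) u :=
    (hasDerivAt_inv hg0).comp_hasFDerivAt u hg.hasFDerivAt
  have hquot : HasFDerivAt (fun v => f v / g v)
      (f u • (-(g u ^ 2)⁻¹) • fderiv ℝ g u + (g u)⁻¹ • fderiv ℝ f u) u := by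
    simpa only [div_eq_mul_inv] using hf.hasFDerivAt.fun_mul hinv
  simp only [pd, hquot.fderiv, add_apply, smul_apply, smul_eq_mul]
  field_simp
  ring

lemma differentiable_pd (hf : ContDiff ℝ 2 f) : Differentiable ℝ (pd k f) :=
  ((hf.fderiv_right le_rfl).clm_apply contDiff_const).differentiable one_ne_zero

lemma pd_pd_div_two_mul {m : Fin 2} (hf : ContDiff ℝ 2 f) (hg : ContDiff ℝ 2 g)
    (hg0 : g u ≠ 0) :
    pd k (fun v => pd m f v / (2 * g v)) u
      = (pd k (pd m f) u * (2 * g u) - pd m f u * (2 * pd k g u)) / (2 * g u) ^ 2 := by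
  have hg' : DifferentiableAt ℝ g u := hg.differentiable two_ne_zero u
  rw [pd_div (differentiable_pd hf u) (hg'.const_mul 2) (mul_ne_zero two_ne_zero hg0),
    pd_const_mul 2 hg']

lemma differentiableAt_pd_div_two_mul {m : Fin 2} (hf : ContDiff ℝ 2 f) (hg : ContDiff ℝ 2 g)
    (hg0 : g u ≠ 0) :
    DifferentiableAt ℝ (fun v => pd m f v / (2 * g v)) u := by
  have hf' : DifferentiableAt ℝ (pd m f) u := differentiable_pd hf u
  have hg' : DifferentiableAt ℝ g u := hg.differentiable two_ne_zero u
  fun_prop (disch := positivity)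

end PartialDerivatives

section DiagonalMetric

variable (a b : (Fin 2 → ℝ) → ℝ)

lemma gmat_eq_ite (i j : Fin 2) :
    gmat a b i j = if i = j then (if i = 0 then a else b) else fun _ => 0 := by
  fin_cases i <;> fin_cases j <;> funext v <;> simp [gmat]

lemma Lhat_zero_zero_zero : Lhat a b 0 0 0 = fun u => pd 0 a u / (2 * a u) :=
  funext fun _ => by simp [Lhat, gmat_eq_ite, gmatInv, field]

lemma Lhat_zero_zero_one : Lhat a b 0 0 1 = fun u => pd 1 a u / (2 * a u) :=
  funext fun _ => by simp [Lhat, gmat_eq_ite, gmatInv, field]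

lemma Lhat_zero_one_zero : Lhat a b 0 1 0 = fun u => pd 1 a u / (2 * a u) :=
  funext fun _ => by simp [Lhat, gmat_eq_ite, gmatInv, field]

lemma Lhat_zero_one_one : Lhat a b 0 1 1 = fun u => -(pd 0 b u / (2 * a u)) :=
  funext fun _ => by simp [Lhat, gmat_eq_ite, gmatInv, field]

lemma Lhat_one_zero_zero : Lhat a b 1 0 0 = fun u => -(pd 1 a u / (2 * b u)) :=
  funext fun _ => by simp [Lhat, gmat_eq_ite, gmatInv, field]

lemma Lhat_one_zero_one : Lhat a b 1 0 1 = fun u => pd 0 b u / (2 * b u) :=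
  funext fun _ => by simp [Lhat, gmat_eq_ite, gmatInv, field]

lemma Lhat_one_one_zero : Lhat a b 1 1 0 = fun u => pd 0 b u / (2 * b u) :=
  funext fun _ => by simp [Lhat, gmat_eq_ite, gmatInv, field]

lemma Lhat_one_one_one : Lhat a b 1 1 1 = fun u => pd 1 b u / (2 * b u) :=
  funext fun _ => by simp [Lhat, gmat_eq_ite, gmatInv, field]

def gaussCurvature (u : Fin 2 → ℝ) : ℝ :=
  -(1 / (2 * a u * b u)) *
    (pd 0 (pd 0 b) u - pd 0 a u * pd 0 b u / (2 * a u) - (pd 0 b u) ^ 2 / (2 * b u)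
      + pd 1 (pd 1 a) u - pd 1 a u * pd 1 b u / (2 * b u) - (pd 1 a u) ^ 2 / (2 * a u))

variable {a b} {u : Fin 2 → ℝ}

lemma Ric_zero_zero (ha : ContDiff ℝ 2 a) (hb : ContDiff ℝ 2 b) (ha0 : a u ≠ 0)
    (hb0 : b u ≠ 0) :
    Ric a b 0 0 u = gaussCurvature a b u * a u := by
  simp only [Ric, Fin.sum_univ_two, Lhat_zero_zero_zero, Lhat_zero_zero_one, Lhat_zero_one_zero,
    Lhat_one_zero_zero, Lhat_one_zero_one, Lhat_one_one_zero, Lhat_one_one_one]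
  rw [pd_add (differentiableAt_pd_div_two_mul ha ha ha0)
      (differentiableAt_pd_div_two_mul hb hb hb0),
    pd_neg, pd_pd_div_two_mul ha ha ha0, pd_pd_div_two_mul ha hb hb0, pd_pd_div_two_mul hb hb hb0]
  simp only [gaussCurvature]
  field_simp
  ring

lemma Ric_one_one (ha : ContDiff ℝ 2 a) (hb : ContDiff ℝ 2 b) (ha0 : a u ≠ 0)
    (hb0 : b u ≠ 0) :
    Ric a b 1 1 u = gaussCurvature a b u * b u := by
  simp only [Ric, Fin.sum_univ_two, Lhat_zero_zero_zero, Lhat_zero_zero_one, Lhat_zero_one_zero,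
    Lhat_zero_one_one, Lhat_one_zero_one, Lhat_one_one_zero, Lhat_one_one_one]
  rw [pd_add (differentiableAt_pd_div_two_mul ha ha ha0)
      (differentiableAt_pd_div_two_mul hb hb hb0),
    pd_neg, pd_pd_div_two_mul hb ha ha0, pd_pd_div_two_mul ha ha ha0, pd_pd_div_two_mul hb hb hb0]
  simp only [gaussCurvature]
  field_simp
  ring

end DiagonalMetric

theorem horizontal_ricci_diagonal_2d
    (g₁ g₂ : (Fin 2 → ℝ) → ℝ)
    (hg₁ : ContDiff ℝ 2 g₁) (hg₂ : ContDiff ℝ 2 g₂)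
    (hg₁0 : ∀ u, g₁ u ≠ 0) (hg₂0 : ∀ u, g₂ u ≠ 0) :
    ∀ u : Fin 2 → ℝ,
      Ric g₁ g₂ 0 0 u / g₁ u
        = -(1 / (2 * g₁ u * g₂ u)) *
          (pd 0 (pd 0 g₂) u - pd 0 g₁ u * pd 0 g₂ u / (2 * g₁ u)
            - (pd 0 g₂ u) ^ 2 / (2 * g₂ u)
            + pd 1 (pd 1 g₁) u - pd 1 g₁ u * pd 1 g₂ u / (2 * g₂ u)
            - (pd 1 g₁ u) ^ 2 / (2 * g₁ u)) ∧
      Ric g₁ g₂ 1 1 u / g₂ u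
        = -(1 / (2 * g₁ u * g₂ u)) *
          (pd 0 (pd 0 g₂) u - pd 0 g₁ u * pd 0 g₂ u / (2 * g₁ u)
            - (pd 0 g₂ u) ^ 2 / (2 * g₂ u)
            + pd 1 (pd 1 g₁) u - pd 1 g₁ u * pd 1 g₂ u / (2 * g₂ u)
            - (pd 1 g₁ u) ^ 2 / (2 * g₁ u)) := by
  intro u
  constructor
  · rw [Ric_zero_zero hg₁ hg₂ (hg₁0 u) (hg₂0 u), mul_div_cancel_right₀ _ (hg₁0 u), gaussCurvature]
  · rw [Ric_one_one hg₁ hg₂ (hg₁0 u) (hg₂0 u), mul_div_cancel_right₀ _ (hg₂0 u), gaussCurvature]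

end
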